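/- arXiv:2505.01889 — 2 statements merged into one kernel-verified Lean document; each statement's English description precedes it below -/
import Mathlib

section
/- Let d ≥ 1 and α ∈ ℝ^d. Assume there exist constants C > 0 and L > 0 such that for every p ∈ ℤ^d and every integer q ≥ 1, one has ‖α − p/q‖ ≥ C q^{-L}. Then there exist constants C' > 0 and N > 0 such that for every ξ ∈ ℤ \ {0}, max_{1 ≤ ℓ ≤ d} |exp(2πi ξ α_ℓ) − 1| ≥ C' |ξ|^{-N}. -/
/-- The Euclidean norm of a vector in `ℝ^d` (presented as `Fin d → ℝ`). -/
noncomputable def eunorm {k : ℕ} (v : Fin k → ℝ) : ℝ :=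
  ‖(EuclideanSpace.equiv (Fin k) ℝ).symm v‖

/-!
The hypothesis extends to negative denominators (replace `p` by `-p`). Take the denominator `ξ`
and `p_ℓ = round (ξ α_ℓ)`: then `α - p/ξ` has coordinates `(ξ α_ℓ - round (ξ α_ℓ)) / ξ`, so the
Diophantine bound forces some coordinate to satisfy
`|ξ α_ℓ - round (ξ α_ℓ)| ≥ C |ξ|^{-L} / √d`. Finally
`|exp(2πix) - 1| = 2|sin(π(x - round x))| ≥ 4|x - round x|` by Jordan's inequality
`sin t ≥ 2t/π` on `[0, π/2]`.
-/

open Complex in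
theorem norm_exp_two_pi_I_mul_sub_one_eq (x : ℝ) :
    ‖exp (2 * Real.pi * I * (x : ℂ)) - 1‖ = 2 * |Real.sin (Real.pi * (x - round x))| := by
  have hperiod :
      exp (2 * Real.pi * I * (x : ℂ)) = exp (I * ((2 * Real.pi * (x - round x) : ℝ) : ℂ)) := by
    rw [show 2 * Real.pi * I * (x : ℂ)
        = I * ((2 * Real.pi * (x - round x) : ℝ) : ℂ) + round x * (2 * Real.pi * I) by
      push_cast; ring, exp_add, exp_int_mul_two_pi_mul_I, mul_one]
  rw [hperiod, norm_exp_I_mul_ofReal_sub_one, norm_mul, Real.norm_eq_abs, Real.norm_eq_abs,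
    abs_two, mul_div_right_comm, mul_div_cancel_left₀ _ two_ne_zero]

open Complex in
theorem four_mul_abs_sub_round_le_norm_exp_sub_one (x : ℝ) :
    4 * |x - round x| ≤ ‖exp (2 * Real.pi * I * (x : ℂ)) - 1‖ := by
  have hx : |Real.pi * (x - round x)| ≤ Real.pi / 2 := by
    rw [abs_mul, abs_of_pos Real.pi_pos]
    nlinarith [abs_sub_round x, Real.pi_pos]
  have hsin := Real.mul_abs_le_abs_sin hx
  rw [abs_mul, abs_of_pos Real.pi_pos] at hsin
  field_simp at hsin
  rw [norm_exp_two_pi_I_mul_sub_one_eq]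
  linarith

theorem eunorm_le_sqrt_mul {k : ℕ} {v : Fin k → ℝ} {M : ℝ} (hM : 0 ≤ M) (hv : ∀ i, |v i| ≤ M) :
    eunorm v ≤ √k * M := by
  calc eunorm v = √(∑ i, v i ^ 2) := by simp [eunorm, EuclideanSpace.norm_eq]
    _ ≤ √(∑ _i : Fin k, M ^ 2) := by
      refine Real.sqrt_le_sqrt (Finset.sum_le_sum fun i _ => ?_)
      exact sq_le_sq' (abs_le.mp (hv i)).1 (abs_le.mp (hv i)).2
    _ = √k * M := by simp [Real.sqrt_mul, Real.sqrt_sq hM]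

theorem exists_div_sqrt_le_abs_of_le_eunorm {k : ℕ} (hk : 0 < k) {v : Fin k → ℝ} {c : ℝ}
    (hc : c ≤ eunorm v) : ∃ i, c / √k ≤ |v i| := by
  obtain ⟨i, -, hi⟩ := Finset.exists_max_image Finset.univ (fun i => |v i|)
    ⟨⟨0, hk⟩, Finset.mem_univ _⟩
  refine ⟨i, (div_le_iff₀' (by positivity)).2 (hc.trans ?_)⟩
  exact eunorm_le_sqrt_mul (abs_nonneg _) fun j => hi j (Finset.mem_univ j)

theorem le_eunorm_sub_div_of_int_denom {d : ℕ} {α : Fin d → ℝ} {C L : ℝ}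
    (h : ∀ (p : Fin d → ℤ) (q : ℕ), 1 ≤ q →
      C * (q : ℝ) ^ (-L) ≤ eunorm (fun ℓ => α ℓ - (p ℓ : ℝ) / (q : ℝ)))
    (p : Fin d → ℤ) {q : ℤ} (hq : q ≠ 0) :
    C * |(q : ℝ)| ^ (-L) ≤ eunorm (fun ℓ => α ℓ - (p ℓ : ℝ) / (q : ℝ)) := by
  rcases hq.lt_or_gt with hneg | hpos
  · have := h (-p) q.natAbs (by omega)
    rw [Nat.cast_natAbs, Int.cast_abs, abs_of_neg (by exact_mod_cast hneg)] at *
    simpa [neg_div_neg_eq] using this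
  · have := h p q.natAbs (by omega)
    rwa [Nat.cast_natAbs, Int.cast_abs, abs_of_pos (by exact_mod_cast hpos)] at *

theorem abs_sub_div_le_abs_mul_sub (a b : ℝ) {q : ℝ} (hq : 1 ≤ |q|) :
    |a - b / q| ≤ |q * a - b| := by
  have hq0 : q ≠ 0 := abs_pos.mp (one_pos.trans_le hq)
  rw [show a - b / q = (q * a - b) / q by field_simp, abs_div]
  exact div_le_self (abs_nonneg _) hq

/-- Let `α ∈ ℝ^d` satisfy the non-Liouville Diophantine estimate: there are `C, L > 0` with
`‖α - p/q‖ ≥ C q^{-L}` for every `p ∈ ℤ^d` and every integer `q ≥ 1`. Then there are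
`C', N > 0` such that for every `ξ ∈ ℤ ∖ {0}`,
`max_{1 ≤ ℓ ≤ d} |exp(2πi ξ α_ℓ) - 1| ≥ C' |ξ|^{-N}`. -/
theorem stmt1 (d : ℕ) (hd : 1 ≤ d) (α : Fin d → ℝ) (C L : ℝ) (hC : 0 < C) (hL : 0 < L)
    (h : ∀ (p : Fin d → ℤ) (q : ℕ), 1 ≤ q →
      C * (q : ℝ) ^ (-L) ≤ eunorm (fun ℓ => α ℓ - (p ℓ : ℝ) / (q : ℝ))) :
    ∃ (C' N : ℝ), 0 < C' ∧ 0 < N ∧ ∀ ξ : ℤ, ξ ≠ 0 →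
      ∃ ℓ : Fin d, C' * |(ξ : ℝ)| ^ (-N) ≤
        ‖Complex.exp (2 * Real.pi * Complex.I * (((ξ : ℝ) * α ℓ : ℝ) : ℂ)) - 1‖ := by
  refine ⟨4 * C / √d, L, by positivity, hL, fun ξ hξ => ?_⟩
  obtain ⟨ℓ, hℓ⟩ := exists_div_sqrt_le_abs_of_le_eunorm hd <|
    le_eunorm_sub_div_of_int_denom h (fun ℓ => round ((ξ : ℝ) * α ℓ)) hξ
  refine ⟨ℓ, le_trans ?_ (four_mul_abs_sub_round_le_norm_exp_sub_one _)⟩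
  have hξ1 : 1 ≤ |(ξ : ℝ)| := by exact_mod_cast Int.one_le_abs hξ
  calc 4 * C / √d * |(ξ : ℝ)| ^ (-L) = 4 * (C * |(ξ : ℝ)| ^ (-L) / √d) := by ring
    _ ≤ 4 * |ξ * α ℓ - round ((ξ : ℝ) * α ℓ)| := by
      gcongr
      exact hℓ.trans (abs_sub_div_le_abs_mul_sub _ _ hξ1)
end

section
/- Let V ⊆ ℝⁿ be open, and for k = 1,…,m and j = 1,…,n let ω_{kj} : V → ℝ be smooth. For each ξ ∈ ℤ^m, let u_ξ : V → ℂ and f_{j,ξ} : V → ℂ (j = 1,…,n) be smooth functions satisfying the transport equations ∂_{t_j} u_ξ(t) + i (Σ_{k=1}^m ξ_k ω_{kj}(t)) u_ξ(t) = f_{j,ξ}(t) on V for every j and ξ. Assume: (1) for every compact K ⊂ V, every multi-index β ∈ ℕ₀ⁿ, and every N ∈ ℕ₀ there exists C > 0 such that sup_{t ∈ K} |∂_t^β f_{j,ξ}(t)| ≤ C(1 + ‖ξ‖)^{-N} for all j = 1,…,n and ξ ∈ ℤ^m; and (2) for every compact K ⊂ V and every N ∈ ℕ₀ there exists C > 0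 such that sup_{t ∈ K} |u_ξ(t)| ≤ C(1 + ‖ξ‖)^{-N} for all ξ ∈ ℤ^m. Then for every compact K ⊂ V, every multi-index α ∈ ℕ₀ⁿ, and every N ∈ ℕ₀ there exists C > 0 such that sup_{t ∈ K} |∂_t^α u_ξ(t)| ≤ C(1 + ‖ξ‖)^{-N} for all ξ ∈ ℤ^m. -/
/-- The partial derivative `∂/∂t_j` of a function of `t ∈ ℝ^n`. -/
noncomputable def pd {n : ℕ} (j : Fin n) (f : (Fin n → ℝ) → ℂ) : (Fin n → ℝ) → ℂ :=
  fun t => fderiv ℝ f t (Pi.single j 1)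

/-- The multi-index partial derivative `∂_t^α` of a function of `t ∈ ℝ^n`. -/
noncomputable def pdAlpha {n : ℕ} (α : Fin n → ℕ) (f : (Fin n → ℝ) → ℂ) : (Fin n → ℝ) → ℂ :=
  (List.finRange n).foldr (fun j g => (pd j)^[α j] g) f

noncomputable def pdList {n : ℕ} (L : List (Fin n)) (f : (Fin n → ℝ) → ℂ) : (Fin n → ℝ) → ℂ :=
  L.foldr pd f

section structural
variable {n : ℕ}

theorem pdList_cons (j : Fin n) (L : List (Fin n)) (f : (Fin n → ℝ) → ℂ) :
    pdList (j :: L) f = pd j (pdList L f) := rfl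

theorem pdList_append (L₁ L₂ : List (Fin n)) (f : (Fin n → ℝ) → ℂ) :
    pdList (L₁ ++ L₂) f = pdList L₁ (pdList L₂ f) := List.foldr_append ..

theorem pdList_concat' (L : List (Fin n)) (j : Fin n) (f : (Fin n → ℝ) → ℂ) :
    pdList (L ++ [j]) f = pdList L (pd j f) := pdList_append ..

theorem pdList_replicate (c : ℕ) (j : Fin n) (f : (Fin n → ℝ) → ℂ) :
    pdList (List.replicate c j) f = (pd j)^[c] f := by
  induction c with
  | zero => rfl
  | succ c ih => rw [List.replicate_succ, pdList_cons, ih, Function.iterate_succ_apply']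

/-- the canonical list of a multi-index -/
def mitl (α : Fin n → ℕ) : List (Fin n) :=
  (List.finRange n).flatMap fun j => List.replicate (α j) j

theorem pdAlpha_eq_pdList (α : Fin n → ℕ) (f : (Fin n → ℝ) → ℂ) :
    pdAlpha α f = pdList (mitl α) f := by
  show (List.finRange n).foldr (fun j g => (pd j)^[α j] g) f = _
  unfold mitl
  induction (List.finRange n) with
  | nil => rfl
  | cons x S ih =>
      rw [List.foldr_cons, List.flatMap_cons, pdList_append, pdList_replicate, ih]

theorem count_mitl_length (L : List (Fin n)) :
    (mitl (fun j => L.count j)).Perm L := by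
  rw [List.perm_iff_count]
  intro a
  unfold mitl
  have H : ∀ S : List (Fin n), S.Nodup →
      (S.flatMap fun j => List.replicate (L.count j) j).count a
        = if a ∈ S then L.count a else 0 := by
    intro S
    induction S with
    | nil => simp
    | cons x S ih =>
        intro hnd
        rw [List.flatMap_cons, List.count_append, List.count_replicate,
          ih (List.nodup_cons.1 hnd).2]
        by_cases hax : a = x
        · subst hax
          simp [(List.nodup_cons.1 hnd).1]
        · simp [hax, Ne.symm hax]
  rw [H _ (List.nodup_finRange n)]
  simp
end structural

section AuxAnalysis
open scoped ContDiff

theorem eunorm_nonneg {k : ℕ} (v : Fin k → ℝ) : 0 ≤ eunorm v := norm_nonneg _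

theorem abs_coord_le_eunorm {k : ℕ} (v : Fin k → ℝ) (i : Fin k) : |v i| ≤ eunorm v := by
  unfold eunorm
  rw [EuclideanSpace.norm_eq]
  have h1 : |v i| = Real.sqrt (‖v i‖ ^ 2) := by
    rw [Real.sqrt_sq_eq_abs, Real.norm_eq_abs, abs_abs]
  rw [h1]
  apply Real.sqrt_le_sqrt
  exact Finset.single_le_sum (fun a _ => sq_nonneg (‖v a‖)) (Finset.mem_univ i)

variable {n : ℕ} {V : Set (Fin n → ℝ)}

theorem diffAt (hV : IsOpen V) {F : Type*} [NormedAddCommGroup F] [NormedSpace ℝ F]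
    {h : (Fin n → ℝ) → F} (hh : ContDiffOn ℝ ∞ h V)
    {t : Fin n → ℝ} (ht : t ∈ V) : DifferentiableAt ℝ h t :=
  (hh.contDiffAt (hV.mem_nhds ht)).differentiableAt (by simp)

theorem pd_congr (hV : IsOpen V) {h₁ h₂ : (Fin n → ℝ) → ℂ} (j : Fin n)
    (he : Set.EqOn h₁ h₂ V) : Set.EqOn (pd j h₁) (pd j h₂) V := by
  intro t ht
  unfold pd
  rw [Filter.EventuallyEq.fderiv_eq (Filter.eventuallyEq_of_mem (hV.mem_nhds ht) he)]

theorem pdList_congr (hV : IsOpen V) {h₁ h₂ : (Fin n → ℝ) → ℂ} (L : List (Fin n))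
    (he : Set.EqOn h₁ h₂ V) : Set.EqOn (pdList L h₁) (pdList L h₂) V := by
  induction L with
  | nil => exact he
  | cons j L ih => exact pd_congr hV j ih

theorem pd_contDiffOn (hV : IsOpen V) {h : (Fin n → ℝ) → ℂ} (hh : ContDiffOn ℝ ∞ h V)
    (j : Fin n) : ContDiffOn ℝ ∞ (pd j h) V := by
  have h1 : ContDiffOn ℝ ∞ (fderiv ℝ h) V :=
    hh.fderiv_of_isOpen hV (by simp)
  exact h1.clm_apply contDiffOn_const

theorem pdList_contDiffOn (hV : IsOpen V) {h : (Fin n → ℝ) → ℂ} (hh : ContDiffOn ℝ ∞ h V)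
    (L : List (Fin n)) : ContDiffOn ℝ ∞ (pdList L h) V := by
  induction L with
  | nil => exact hh
  | cons j L ih => exact pd_contDiffOn hV ih j

theorem pd_add (hV : IsOpen V) {h₁ h₂ : (Fin n → ℝ) → ℂ} (hh₁ : ContDiffOn ℝ ∞ h₁ V)
    (hh₂ : ContDiffOn ℝ ∞ h₂ V) (j : Fin n) {t : Fin n → ℝ} (ht : t ∈ V) :
    pd j (fun s => h₁ s + h₂ s) t = pd j h₁ t + pd j h₂ t := by
  unfold pd
  rw [fderiv_fun_add (diffAt hV hh₁ ht) (diffAt hV hh₂ ht)]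
  rfl

theorem pd_const_mul (hV : IsOpen V) {h : (Fin n → ℝ) → ℂ} (hh : ContDiffOn ℝ ∞ h V)
    (c : ℂ) (j : Fin n) {t : Fin n → ℝ} (ht : t ∈ V) :
    pd j (fun s => c * h s) t = c * pd j h t := by
  unfold pd
  rw [fderiv_const_mul (diffAt hV hh ht) c]
  rfl

theorem pd_mul (hV : IsOpen V) {g h : (Fin n → ℝ) → ℂ} (hg : ContDiffOn ℝ ∞ g V)
    (hh : ContDiffOn ℝ ∞ h V) (j : Fin n) {t : Fin n → ℝ} (ht : t ∈ V) :
    pd j (fun s => g s * h s) t = pd j g t * h t + g t * pd j h t := by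
  unfold pd
  rw [fderiv_fun_mul (diffAt hV hg ht) (diffAt hV hh ht)]
  simp
  ring

theorem pd_comm (hV : IsOpen V) {h : (Fin n → ℝ) → ℂ} (hh : ContDiffOn ℝ ∞ h V)
    (i j : Fin n) {t : Fin n → ℝ} (ht : t ∈ V) :
    pd i (pd j h) t = pd j (pd i h) t := by
  have hsym : IsSymmSndFDerivAt ℝ h t :=
    (hh.contDiffAt (hV.mem_nhds ht)).isSymmSndFDerivAt
      (by rw [minSmoothness_of_isRCLikeNormedField]; exact WithTop.coe_le_coe.2 (le_top : (2:ℕ∞) ≤ ⊤))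
  have hd : DifferentiableAt ℝ (fderiv ℝ h) t :=
    diffAt hV (hh.fderiv_of_isOpen hV (by simp)) ht
  have key : ∀ v : Fin n → ℝ, ∀ w : Fin n → ℝ,
      fderiv ℝ (fun s => fderiv ℝ h s v) t w = fderiv ℝ (fderiv ℝ h) t w v := by
    intro v w
    have : (fun s => fderiv ℝ h s v)
        = (ContinuousLinearMap.apply ℝ ℂ v) ∘ (fderiv ℝ h) := rfl
    rw [this, (ContinuousLinearMap.apply ℝ ℂ v).hasFDerivAt.comp t hd.hasFDerivAt |>.fderiv]
    rfl
  show fderiv ℝ (fun s => fderiv ℝ h s (Pi.single j 1)) t (Pi.single i 1)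
      = fderiv ℝ (fun s => fderiv ℝ h s (Pi.single i 1)) t (Pi.single j 1)
  rw [key, key, hsym.eq]

theorem pdList_perm (hV : IsOpen V) {h : (Fin n → ℝ) → ℂ} (hh : ContDiffOn ℝ ∞ h V)
    {L₁ L₂ : List (Fin n)} (hp : L₁.Perm L₂) :
    Set.EqOn (pdList L₁ h) (pdList L₂ h) V := by
  induction hp with
  | nil => exact fun t _ => rfl
  | cons x _ ih => exact pd_congr hV x ih
  | swap x y L =>
      intro t ht
      exact pd_comm hV (pdList_contDiffOn hV hh L) y x ht
  | trans _ _ ih₁ ih₂ => exact fun t ht => (ih₁ ht).trans (ih₂ ht)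

theorem pdList_add (hV : IsOpen V) {h₁ h₂ : (Fin n → ℝ) → ℂ} (hh₁ : ContDiffOn ℝ ∞ h₁ V)
    (hh₂ : ContDiffOn ℝ ∞ h₂ V) (L : List (Fin n)) {t : Fin n → ℝ} (ht : t ∈ V) :
    pdList L (fun s => h₁ s + h₂ s) t = pdList L h₁ t + pdList L h₂ t := by
  induction L generalizing t with
  | nil => rfl
  | cons j L ih =>
      show pd j (pdList L fun s => h₁ s + h₂ s) t = pd j (pdList L h₁) t + pd j (pdList L h₂) t
      rw [pd_congr hV j (fun s hs => ih hs) ht]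
      exact pd_add hV (pdList_contDiffOn hV hh₁ L) (pdList_contDiffOn hV hh₂ L) j ht

theorem pdList_const_mul (hV : IsOpen V) {h : (Fin n → ℝ) → ℂ} (hh : ContDiffOn ℝ ∞ h V)
    (c : ℂ) (L : List (Fin n)) {t : Fin n → ℝ} (ht : t ∈ V) :
    pdList L (fun s => c * h s) t = c * pdList L h t := by
  induction L generalizing t with
  | nil => rfl
  | cons j L ih =>
      show pd j (pdList L fun s => c * h s) t = c * pd j (pdList L h) t
      rw [pd_congr hV j (fun s hs => ih hs) ht]
      exact pd_const_mul hV (pdList_contDiffOn hV hh L) c j ht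

theorem pdList_zero (L : List (Fin n)) : pdList L (fun _ => (0:ℂ)) = fun _ => 0 := by
  induction L with
  | nil => rfl
  | cons j L ih =>
      show pd j (pdList L fun _ => 0) = _
      rw [ih]
      funext t
      show fderiv ℝ (fun _ => (0:ℂ)) t (Pi.single j 1) = 0
      simp

theorem pdList_sum (hV : IsOpen V) {ι : Type*} (s : Finset ι)
    (g : ι → (Fin n → ℝ) → ℂ) (hg : ∀ i ∈ s, ContDiffOn ℝ ∞ (g i) V)
    (L : List (Fin n)) {t : Fin n → ℝ} (ht : t ∈ V) :
    pdList L (fun x => ∑ i ∈ s, g i x) t = ∑ i ∈ s, pdList L (g i) t := by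
  classical
  revert hg
  induction s using Finset.induction_on with
  | empty => intro _; simp [pdList_zero]
  | @insert a s' hx ih =>
      intro hg
      simp only [Finset.sum_insert hx]
      have h1 : ContDiffOn ℝ ∞ (g a) V := hg a (Finset.mem_insert_self a s')
      have h2 : ContDiffOn ℝ ∞ (fun x => ∑ i ∈ s', g i x) V :=
        ContDiffOn.sum fun i hi => hg i (Finset.mem_insert_of_mem hi)
      rw [pdList_add hV h1 h2 L ht, ih (fun i hi => hg i (Finset.mem_insert_of_mem hi))]

/-- rapid decay up to order `d` -/
def Dec {n m : ℕ} (V : Set (Fin n → ℝ)) (d : ℕ)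
    (h : (Fin m → ℤ) → (Fin n → ℝ) → ℂ) : Prop :=
  ∀ K, K ⊆ V → IsCompact K → ∀ L : List (Fin n), L.length ≤ d → ∀ N : ℕ, ∃ C, 0 < C ∧
    ∀ ξ t, t ∈ K → ‖pdList L (h ξ) t‖ ≤
      C * ((1 + eunorm (fun k => ((ξ k : ℤ) : ℝ))) ^ N)⁻¹

theorem dec_pd {m : ℕ} {d : ℕ}
    {h : (Fin m → ℤ) → (Fin n → ℝ) → ℂ} (hd : Dec V (d + 1) h) (j : Fin n) :
    Dec V d (fun ξ => pd j (h ξ)) := by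
  intro K hK hKc L hL N
  obtain ⟨C, hC, hb⟩ := hd K hK hKc (L ++ [j]) (by simpa using Nat.succ_le_succ hL) N
  exact ⟨C, hC, fun ξ t ht => by rw [← pdList_concat']; exact hb ξ t ht⟩

theorem prod_decay {m : ℕ} (hV : IsOpen V) (d : ℕ) :
    ∀ (g : (Fin n → ℝ) → ℂ), ContDiffOn ℝ ∞ g V →
    ∀ (h : (Fin m → ℤ) → (Fin n → ℝ) → ℂ), (∀ ξ, ContDiffOn ℝ ∞ (h ξ) V) →
    Dec V d h → Dec V d (fun ξ s => g s * h ξ s) := by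
  induction d with
  | zero =>
      intro g hg h hsm hd K hK hKc L hL N
      obtain ⟨C, hC, hb⟩ := hd K hK hKc [] (le_refl _) N
      obtain ⟨M, hM⟩ := hKc.exists_bound_of_continuousOn (hg.continuousOn.mono hK)
      have hL0 : L = [] := List.length_eq_zero_iff.1 (Nat.le_zero.1 hL)
      subst hL0
      refine ⟨(max M 0 + 1) * C, by positivity, fun ξ t ht => ?_⟩
      show ‖g t * h ξ t‖ ≤ _
      rw [norm_mul, mul_assoc]
      have h1 : ‖g t‖ ≤ max M 0 + 1 := by
        have := hM t ht
        have h2 : ‖g t‖ = ‖g t‖ := rfl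
        rw [h2]
        have := le_max_left M 0
        linarith
      have h3 : (0:ℝ) ≤ C * ((1 + eunorm fun k => ((ξ k : ℤ) : ℝ)) ^ N)⁻¹ := by
        have : (0:ℝ) ≤ eunorm fun k => ((ξ k : ℤ) : ℝ) := norm_nonneg _
        positivity
      exact mul_le_mul h1 (hb ξ t ht) (by positivity) (by positivity)
  | succ d ih =>
      intro g hg h hsm hd K hK hKc L hL N
      have hdd : Dec V d h := fun K hK hKc L hL N => hd K hK hKc L (hL.trans (Nat.le_succ d)) N
      by_cases hld : L.length ≤ d
      · exact ih g hg h hsm hdd K hK hKc L hld N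
      · obtain rfl | ⟨L', j, rfl⟩ := L.eq_nil_or_concat
        · exact absurd (Nat.zero_le d) (by simp at hld)
        · simp only [List.concat_eq_append] at hL hld ⊢
          have hL' : L'.length ≤ d := by
            simp only [List.length_append, List.length_cons, List.length_nil] at hL
            omega
          obtain ⟨C₁, hC₁, hb₁⟩ := ih (pd j g) (pd_contDiffOn hV hg j) h hsm hdd K hK hKc L' hL' N
          obtain ⟨C₂, hC₂, hb₂⟩ := ih g hg (fun ξ => pd j (h ξ)) (fun ξ => pd_contDiffOn hV (hsm ξ) j)
            (dec_pd hd j) K hK hKc L' hL' N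
          refine ⟨C₁ + C₂, by positivity, fun ξ t ht => ?_⟩
          have htV : t ∈ V := hK ht
          have heqV : Set.EqOn (pd j (fun s => g s * h ξ s))
              (fun s => pd j g s * h ξ s + g s * pd j (h ξ) s) V := fun s hs =>
            pd_mul hV hg (hsm ξ) j hs
          have e1 : pdList (L' ++ [j]) (fun s => g s * h ξ s) t
              = pdList L' (fun s => pd j g s * h ξ s) t + pdList L' (fun s => g s * pd j (h ξ) s) t := by
            rw [pdList_concat', pdList_congr hV L' heqV htV]
            exact pdList_add hV ((pd_contDiffOn hV hg j).mul (hsm ξ))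
              (hg.mul (pd_contDiffOn hV (hsm ξ) j)) L' htV
          calc ‖pdList (L' ++ [j]) (fun s => g s * h ξ s) t‖
              ≤ ‖pdList L' (fun s => pd j g s * h ξ s) t‖
                + ‖pdList L' (fun s => g s * pd j (h ξ) s) t‖ := by
                rw [e1]; exact norm_add_le _ _
            _ ≤ C₁ * ((1 + eunorm fun k => ((ξ k : ℤ) : ℝ)) ^ N)⁻¹
                + C₂ * ((1 + eunorm fun k => ((ξ k : ℤ) : ℝ)) ^ N)⁻¹ :=
                add_le_add (hb₁ ξ t ht) (hb₂ ξ t ht)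
            _ = (C₁ + C₂) * ((1 + eunorm fun k => ((ξ k : ℤ) : ℝ)) ^ N)⁻¹ := by ring

end AuxAnalysis

/-- Let `V ⊆ ℝ^n` be open, `ω_{kj}` smooth real-valued on `V`, and suppose the smooth functions
`u_ξ, f_{j,ξ}` satisfy the transport equations
`∂_{t_j} u_ξ + i (Σ_k ξ_k ω_{kj}) u_ξ = f_{j,ξ}` on `V`. If all derivatives of the `f_{j,ξ}` are
rapidly decreasing in `ξ` uniformly on compacts, and the `u_ξ` themselves are rapidly decreasing
in `ξ` uniformly on compacts, then all derivatives `∂_t^α u_ξ` are rapidly decreasing in `ξ`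
uniformly on compacts. -/
theorem stmt7 {n m : ℕ} (V : Set (Fin n → ℝ)) (hV : IsOpen V)
    (ω : Fin m → Fin n → (Fin n → ℝ) → ℝ)
    (hω : ∀ (k : Fin m) (j : Fin n), ContDiffOn ℝ (⊤ : ℕ∞) (ω k j) V)
    (u : (Fin m → ℤ) → (Fin n → ℝ) → ℂ)
    (f : Fin n → (Fin m → ℤ) → (Fin n → ℝ) → ℂ)
    (hu : ∀ ξ, ContDiffOn ℝ (⊤ : ℕ∞) (u ξ) V)
    (hf : ∀ (j : Fin n) (ξ : Fin m → ℤ), ContDiffOn ℝ (⊤ : ℕ∞) (f j ξ) V)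
    (heq : ∀ (j : Fin n) (ξ : Fin m → ℤ) (t : Fin n → ℝ), t ∈ V →
      pd j (u ξ) t + Complex.I * ((∑ k, (ξ k : ℝ) * ω k j t : ℝ) : ℂ) * u ξ t = f j ξ t)
    (hfdecay : ∀ K : Set (Fin n → ℝ), K ⊆ V → IsCompact K →
      ∀ (β : Fin n → ℕ) (N : ℕ), ∃ C > 0,
        ∀ (j : Fin n) (ξ : Fin m → ℤ) (t : Fin n → ℝ), t ∈ K →
          ‖pdAlpha β (f j ξ) t‖ ≤
            C * ((1 + eunorm (fun k => (ξ k : ℝ))) ^ N)⁻¹)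
    (hudecay : ∀ K : Set (Fin n → ℝ), K ⊆ V → IsCompact K → ∀ N : ℕ, ∃ C > 0,
      ∀ (ξ : Fin m → ℤ) (t : Fin n → ℝ), t ∈ K →
        ‖u ξ t‖ ≤ C * ((1 + eunorm (fun k => (ξ k : ℝ))) ^ N)⁻¹) :
    ∀ K : Set (Fin n → ℝ), K ⊆ V → IsCompact K →
      ∀ (α : Fin n → ℕ) (N : ℕ), ∃ C > 0,
        ∀ (ξ : Fin m → ℤ) (t : Fin n → ℝ), t ∈ K →
          ‖pdAlpha α (u ξ) t‖ ≤
            C * ((1 + eunorm (fun k => (ξ k : ℝ))) ^ N)⁻¹ := by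
  -- downgrade smoothness
  have hu' : ∀ ξ, ContDiffOn ℝ (⊤ : ℕ∞) (u ξ) V := fun ξ => (hu ξ).of_le (by simp)
  have hf' : ∀ j ξ, ContDiffOn ℝ (⊤ : ℕ∞) (f j ξ) V := fun j ξ => (hf j ξ).of_le (by simp)
  have hωℂ : ∀ k j, ContDiffOn ℝ (⊤ : ℕ∞) (fun s => ((ω k j s : ℝ) : ℂ)) V := fun k j =>
    Complex.ofRealCLM.contDiff.comp_contDiffOn ((hω k j).of_le (by simp))
  -- basic facts about the weight
  set E : (Fin m → ℤ) → ℝ := fun ξ => 1 + eunorm (fun k => ((ξ k : ℤ) : ℝ)) with hE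
  have hE1 : ∀ ξ, 1 ≤ E ξ := fun ξ => by
    have := eunorm_nonneg (fun k => ((ξ k : ℤ) : ℝ)); simp [hE]; linarith
  have hEpos : ∀ ξ, 0 < E ξ := fun ξ => lt_of_lt_of_le one_pos (hE1 ξ)
  have hEk : ∀ ξ k, |((ξ k : ℤ) : ℝ)| ≤ E ξ := fun ξ k => by
    have := abs_coord_le_eunorm (fun k => ((ξ k : ℤ) : ℝ)) k
    simp only [hE]; linarith
  -- decay of pdList applied to f, for arbitrary lists
  have hfdec : ∀ K, K ⊆ V → IsCompact K → ∀ L : List (Fin n), ∀ N : ℕ, ∃ C, 0 < C ∧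
      ∀ (j : Fin n) ξ t, t ∈ K → ‖pdList L (f j ξ) t‖ ≤ C * (E ξ ^ N)⁻¹ := by
    intro K hK hKc L N
    obtain ⟨C, hC, hb⟩ := hfdecay K hK hKc (fun i => L.count i) N
    refine ⟨C, hC, fun j ξ t ht => ?_⟩
    have h1 : pdList L (f j ξ) t = pdAlpha (fun i => L.count i) (f j ξ) t := by
      rw [pdAlpha_eq_pdList]
      exact (pdList_perm hV (hf' j ξ) (count_mitl_length L) (hK ht)).symm
    rw [h1]
    exact hb j ξ t ht
  -- the main induction
  have main : ∀ d : ℕ, Dec V d u := by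
    intro d
    induction d with
    | zero =>
        intro K hK hKc L hL N
        obtain ⟨C, hC, hb⟩ := hudecay K hK hKc N
        have hL0 : L = [] := List.length_eq_zero_iff.1 (Nat.le_zero.1 hL)
        subst hL0
        exact ⟨C, hC, fun ξ t ht => hb ξ t ht⟩
    | succ d ih =>
        intro K hK hKc L hL N
        by_cases hld : L.length ≤ d
        · exact ih K hK hKc L hld N
        · obtain rfl | ⟨L', j, rfl⟩ := L.eq_nil_or_concat
          · exact absurd (Nat.zero_le d) (by simp at hld)
          · simp only [List.concat_eq_append] at hL hld ⊢
            have hL' : L'.length ≤ d := by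
              simp only [List.length_append, List.length_cons, List.length_nil] at hL
              omega
            -- constants
            obtain ⟨Cf, hCf, hbf⟩ := hfdec K hK hKc L' N
            choose Ck hCk hbk using fun k : Fin m =>
              prod_decay hV d (fun s => ((ω k j s : ℝ) : ℂ)) (hωℂ k j) u hu' ih
                K hK hKc L' hL' (N + 1)
            refine ⟨Cf + ∑ k, Ck k,
              add_pos_of_pos_of_nonneg hCf (Finset.sum_nonneg fun k _ => (hCk k).le),
              fun ξ t ht => ?_⟩
            have htV : t ∈ V := hK ht
            -- the transport identity as an EqOn
            set w : (Fin n → ℝ) → ℂ := fun s =>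
              f j ξ s + ∑ k, (-Complex.I * ((ξ k : ℤ) : ℂ)) * (((ω k j s : ℝ) : ℂ) * u ξ s)
              with hw
            have htermsmooth : ∀ k : Fin m, ContDiffOn ℝ (⊤ : ℕ∞)
                (fun s => (-Complex.I * ((ξ k : ℤ) : ℂ)) * (((ω k j s : ℝ) : ℂ) * u ξ s)) V :=
              fun k => contDiffOn_const.mul ((hωℂ k j).mul (hu' ξ))
            have hsummand : ContDiffOn ℝ (⊤ : ℕ∞) (fun s =>
                ∑ k, (-Complex.I * ((ξ k : ℤ) : ℂ)) * (((ω k j s : ℝ) : ℂ) * u ξ s)) V :=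
              ContDiffOn.sum fun k _ => htermsmooth k
            have heqw : Set.EqOn (pd j (u ξ)) w V := by
              intro s hs
              have h0 := heq j ξ s hs
              have h1 : pd j (u ξ) s
                  = f j ξ s - Complex.I * ((∑ k, (ξ k : ℝ) * ω k j s : ℝ) : ℂ) * u ξ s := by
                linear_combination h0
              rw [h1, hw]
              push_cast
              rw [Finset.mul_sum, Finset.sum_mul, sub_eq_add_neg, ← Finset.sum_neg_distrib]
              congr 1
              exact Finset.sum_congr rfl fun k _ => by ring
            -- expand
            have e1 : pdList (L' ++ [j]) (u ξ) t
                = pdList L' (f j ξ) t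
                  + ∑ k, (-Complex.I * ((ξ k : ℤ) : ℂ)) *
                      pdList L' (fun s => ((ω k j s : ℝ) : ℂ) * u ξ s) t := by
              rw [pdList_concat', pdList_congr hV L' heqw htV,
                pdList_add hV (hf' j ξ) hsummand L' htV,
                pdList_sum hV Finset.univ _ (fun k _ => htermsmooth k) L' htV]
              congr 1
              exact Finset.sum_congr rfl fun k _ =>
                pdList_const_mul hV ((hωℂ k j).mul (hu' ξ)) _ L' htV
            rw [e1]
            have habs : ∀ k : Fin m,
                ‖(-Complex.I * ((ξ k : ℤ) : ℂ)) *
                  pdList L' (fun s => ((ω k j s : ℝ) : ℂ) * u ξ s) t‖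
                ≤ E ξ * (Ck k * (E ξ ^ (N + 1))⁻¹) := by
              intro k
              rw [norm_mul, norm_mul]
              have h2 : ‖-Complex.I‖ = 1 := by simp
              rw [h2, one_mul]
              have h3 : ‖((ξ k : ℤ) : ℂ)‖ = |((ξ k : ℤ) : ℝ)| := by
                exact Complex.norm_intCast _
              rw [h3]
              exact mul_le_mul (hEk ξ k) (hbk k ξ t ht) (norm_nonneg _) (hEpos ξ).le
            have hEne : E ξ ≠ 0 := ne_of_gt (hEpos ξ)
            have hstep : ∀ k : Fin m, E ξ * (Ck k * (E ξ ^ (N + 1))⁻¹)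
                = Ck k * (E ξ ^ N)⁻¹ := by
              intro k
              rw [pow_succ, mul_inv]
              field_simp
            have hgoal : (1 + eunorm fun k => ((ξ k : ℤ) : ℝ)) = E ξ := rfl
            rw [hgoal]
            calc ‖pdList L' (f j ξ) t
                  + ∑ k, (-Complex.I * ((ξ k : ℤ) : ℂ)) *
                      pdList L' (fun s => ((ω k j s : ℝ) : ℂ) * u ξ s) t‖
                ≤ ‖pdList L' (f j ξ) t‖
                  + ∑ k, ‖(-Complex.I * ((ξ k : ℤ) : ℂ)) *
                      pdList L' (fun s => ((ω k j s : ℝ) : ℂ) * u ξ s) t‖ :=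
                  (norm_add_le _ _).trans
                    (add_le_add_right (norm_sum_le _ _) _)
              _ ≤ Cf * (E ξ ^ N)⁻¹ + ∑ k, E ξ * (Ck k * (E ξ ^ (N + 1))⁻¹) :=
                  add_le_add (hbf j ξ t ht) (Finset.sum_le_sum fun k _ => habs k)
              _ = Cf * (E ξ ^ N)⁻¹ + ∑ k, Ck k * (E ξ ^ N)⁻¹ := by
                  rw [Finset.sum_congr rfl fun k _ => hstep k]
              _ = (Cf + ∑ k, Ck k) * (E ξ ^ N)⁻¹ := by
                  rw [add_mul, Finset.sum_mul]
  -- conclude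
  intro K hK hKc α N
  obtain ⟨C, hC, hb⟩ := main (mitl α).length K hK hKc (mitl α) (le_refl _) N
  refine ⟨C, hC, fun ξ t ht => ?_⟩
  rw [pdAlpha_eq_pdList]
  exact hb ξ t ht
end
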